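/- For every complex number x, ∑_{ν ∈ ℤ} (-1)^ν J_{3ν}(x) = (1/3)[1 + 2 cos(x√3/2)] and ∑_{ν ∈ ℤ} (-1)^ν J_{3ν+1}(x) = −(1/3)[1 − 2 cos(x√3/2 − π/3)]. -/

import Mathlib

open scoped Real

/-- Bessel function of the first kind of natural order `n`, via its power series. -/
noncomputable def besselJNat (n : ℕ) (x : ℂ) : ℂ :=
  ∑' m : ℕ, (-1 : ℂ) ^ m / ((m.factorial : ℂ) * ((m + n).factorial : ℂ)) * (x / 2) ^ (2 * m + n)

/-- Bessel function of the first kind of integer order, with `J_{-n} = (-1)^n J_n`. -/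
noncomputable def besselJ (n : ℤ) (x : ℂ) : ℂ :=
  if 0 ≤ n then besselJNat n.toNat x else (-1 : ℂ) ^ n.natAbs * besselJNat n.natAbs x

/-!
The generating function `∑ₙ Jₙ(x) tⁿ = exp (x (t - t⁻¹) / 2)` is the product of the exponential
series of `x t / 2` and `-x / (2 t)`, regrouped by the difference `j - k` of the two exponents.
Evaluate it at the three cube roots `ω = e^{iπ/3}`, `-1`, `ω⁻¹` of `-1`: since
`ω^m + (-1)^m + ω^{-m}` is `3 (-1)^{m/3}` when `3 ∣ m` and `0` otherwise, the combination
`∑_t t^{-r} exp (x (t - t⁻¹) / 2)` equals `3 ∑_ν (-1)^ν J_{3ν+r}(x)`. For `t = ω^{±1}` the exponent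
is `± i x √3 / 2`, which produces the cosines for `r = 0` and `r = 1`.
-/

open Complex

def intProdNatEquivNatProdNat : ℤ × ℕ ≃ ℕ × ℕ where
  toFun p := (p.2 + p.1.toNat, p.2 + (-p.1).toNat)
  invFun q := ((q.1 : ℤ) - q.2, min q.1 q.2)
  left_inv := by rintro ⟨n, m⟩; ext <;> simp; omega
  right_inv := by rintro ⟨j, k⟩; ext <;> simp <;> omega

theorem hasSum_tsum_mul_toNat_of_summable_norm {R : Type*} [NormedRing R] [CompleteSpace R]
    {f g : ℕ → R} (hf : Summable fun j => ‖f j‖) (hg : Summable fun k => ‖g k‖) :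
    HasSum (fun n : ℤ => ∑' m : ℕ, f (m + n.toNat) * g (m + (-n).toNat))
      ((∑' j, f j) * ∑' k, g k) := by
  set e := intProdNatEquivNatProdNat
  have hprod : Summable fun p : ℕ × ℕ => f p.1 * g p.2 := summable_mul_of_summable_norm hf hg
  rw [tsum_mul_tsum_of_summable_norm hf hg]
  refine (e.hasSum_iff.2 hprod.hasSum).prod_fiberwise fun n => ?_
  exact ((e.summable_iff.2 hprod).comp_injective (Prod.mk_right_injective n)).hasSum

theorem besselJNat_mul_pow_eq_tsum (a : ℕ) (x : ℂ) {t : ℂ} (ht : t ≠ 0) :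
    besselJNat a x * t ^ a = ∑' m : ℕ,
      (x * t / 2) ^ (m + a) / (m + a).factorial * ((-x / (2 * t)) ^ m / m.factorial) := by
  rw [besselJNat, ← tsum_mul_right]
  refine tsum_congr fun m => ?_
  have hinv : t ^ m * t⁻¹ ^ m = 1 := by rw [← mul_pow, mul_inv_cancel₀ ht, one_pow]
  rw [show x * t / 2 = x / 2 * t by ring, show -x / (2 * t) = (-1) * (x / 2) * t⁻¹ by field_simp]
  generalize x / 2 = u
  linear_combination
    -((-1 : ℂ) ^ m / (m.factorial * (m + a).factorial) * u ^ (2 * m + a) * t ^ a) * hinv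

theorem besselJ_mul_zpow_eq_tsum (n : ℤ) (x : ℂ) {t : ℂ} (ht : t ≠ 0) :
    besselJ n x * t ^ n = ∑' m : ℕ,
      (x * t / 2) ^ (m + n.toNat) / (m + n.toNat).factorial *
        ((-x / (2 * t)) ^ (m + (-n).toNat) / (m + (-n).toNat).factorial) := by
  cases n with
  | ofNat a => simpa [besselJ] using besselJNat_mul_pow_eq_tsum a x ht
  | negSucc a =>
    have h := besselJNat_mul_pow_eq_tsum (a + 1) x (neg_ne_zero.2 (inv_ne_zero ht))
    rw [show x * -t⁻¹ / 2 = -x / (2 * t) by ring, show -x / (2 * -t⁻¹) = x * t / 2 by field_simp,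
      neg_pow, inv_pow] at h
    have hJ : besselJ (Int.negSucc a) x = (-1) ^ (a + 1) * besselJNat (a + 1) x :=
      if_neg (Int.negSucc_lt_zero a).not_ge
    rw [hJ, zpow_negSucc, Int.toNat_negSucc, Int.neg_negSucc, Int.toNat_natCast, mul_right_comm,
      mul_comm _ (besselJNat _ x), h]
    exact tsum_congr fun m => by rw [mul_comm, add_zero]

theorem hasSum_besselJ_mul_zpow (x : ℂ) {t : ℂ} (ht : t ≠ 0) :
    HasSum (fun n : ℤ => besselJ n x * t ^ n) (exp (x * (t - t⁻¹) / 2)) := by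
  have h := hasSum_tsum_mul_toNat_of_summable_norm
    (NormedSpace.norm_expSeries_div_summable (x * t / 2))
    (NormedSpace.norm_expSeries_div_summable (-x / (2 * t)))
  rw [← congr_fun NormedSpace.exp_eq_tsum_div, ← congr_fun NormedSpace.exp_eq_tsum_div,
    ← exp_eq_exp_ℂ, ← exp_add] at h
  rw [show x * (t - t⁻¹) / 2 = x * t / 2 + -x / (2 * t) by field_simp; ring]
  simpa only [besselJ_mul_zpow_eq_tsum _ x ht] using h

section CubeRootsOfNegOne

variable {K : Type*} [Field K] {ω : K}

theorem zpow_three_mul_add {b : K} (hb : b ^ 3 = -1) (q r : ℤ) :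
    b ^ (3 * q + r) = (-1) ^ q * b ^ r := by
  have hb0 : b ≠ 0 := by rintro rfl; norm_num at hb
  rw [zpow_add₀ hb0, zpow_mul, show b ^ (3 : ℤ) = -1 by exact_mod_cast hb]

theorem pow_three_eq_neg_one_of_add_inv_eq_one (hω : ω + ω⁻¹ = 1) : ω ^ 3 = -1 := by
  have hinv : ω * ω⁻¹ = 1 := mul_inv_cancel₀ (by rintro rfl; norm_num at hω)
  linear_combination (ω + 1) * (ω * hω - hinv)

theorem zpow_add_neg_one_zpow_add_inv_zpow (hω : ω + ω⁻¹ = 1) (n : ℤ) :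
    ω ^ n + (-1) ^ n + ω⁻¹ ^ n = if 3 ∣ n then 3 * (-1) ^ (n / 3) else 0 := by
  have h3 : ω ^ 3 = -1 := pow_three_eq_neg_one_of_add_inv_eq_one hω
  have h3' : ω⁻¹ ^ 3 = -1 := by rw [inv_pow, h3, inv_neg_one]
  have hinv : ω * ω⁻¹ = 1 := mul_inv_cancel₀ (by rintro rfl; norm_num at h3)
  obtain ⟨q, r, hr, rfl⟩ : ∃ q r : ℤ, (r = 0 ∨ r = 1 ∨ r = 2) ∧ n = 3 * q + r :=
    ⟨n / 3, n % 3, by omega, by omega⟩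
  simp only [zpow_three_mul_add h3, zpow_three_mul_add h3',
    zpow_three_mul_add (by norm_num : (-1 : K) ^ 3 = -1)]
  rcases hr with rfl | rfl | rfl
  · rw [if_pos (by omega), show (3 * q + 0) / 3 = q by omega]
    simp only [zpow_zero]
    ring
  · rw [if_neg (by omega)]
    simp only [zpow_one]
    linear_combination (-1 : K) ^ q * hω
  · rw [if_neg (by omega)]
    simp only [show (2 : ℤ) = (2 : ℕ) from rfl, zpow_natCast]
    linear_combination (-1 : K) ^ q * ((ω + ω⁻¹ + 1) * hω - 2 * hinv)

theorem hasSum_three_mul_neg_one_zpow_mul_of_cube_roots [TopologicalSpace K]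
    [IsTopologicalRing K] {f : ℤ → K} {A B C : K} (hω : ω + ω⁻¹ = 1)
    (hA : HasSum (fun n => f n * ω ^ n) A)
    (hB : HasSum (fun n => f n * (-1) ^ n) B) (hC : HasSum (fun n => f n * ω⁻¹ ^ n) C) (r : ℤ) :
    HasSum (fun ν : ℤ => 3 * ((-1) ^ ν * f (3 * ν + r)))
      (ω⁻¹ ^ r * A + (-1) ^ r * B + ω ^ r * C) := by
  have hω0 : ω ≠ 0 := by rintro rfl; norm_num at hω
  have hshift {t : K} (ht : t ≠ 0) (n : ℤ) : t⁻¹ ^ r * t ^ n = t ^ (n - r) := by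
    rw [inv_zpow', ← zpow_add₀ ht, neg_add_eq_sub]
  have hweight (n : ℤ) :
      ω⁻¹ ^ r * (f n * ω ^ n) + (-1) ^ r * (f n * (-1) ^ n) + ω ^ r * (f n * ω⁻¹ ^ n)
        = f n * if 3 ∣ n - r then 3 * (-1) ^ ((n - r) / 3) else 0 := by
    rw [← zpow_add_neg_one_zpow_add_inv_zpow hω, ← hshift hω0,
      ← hshift (neg_ne_zero.2 one_ne_zero), ← hshift (inv_ne_zero hω0), inv_neg_one, inv_inv]
    ring
  have hsum := ((hA.mul_left (ω⁻¹ ^ r)).add (hB.mul_left ((-1) ^ r))).add (hC.mul_left (ω ^ r))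
  simp only [hweight] at hsum
  have hinj : Function.Injective (fun ν : ℤ => 3 * ν + r) := fun a b h => by simp only at h; omega
  rw [← hinj.hasSum_iff fun n hn => ?_] at hsum
  · refine (congrArg (HasSum · _) (funext fun ν => ?_)).mp hsum
    rw [Function.comp_apply, if_pos (by omega), show (3 * ν + r - r) / 3 = ν by omega]
    ring
  · rw [if_neg fun ⟨k, hk⟩ => hn ⟨k, show 3 * k + r = n by omega⟩, mul_zero]

end CubeRootsOfNegOne

theorem Complex.cos_pi_div_three : cos (π / 3) = 1 / 2 := by
  rw [show (π : ℂ) / 3 = (π / 3 : ℝ) by push_cast; ring, ← ofReal_cos, Real.cos_pi_div_three]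
  push_cast
  ring

theorem Complex.sin_pi_div_three : sin (π / 3) = (Real.sqrt 3 : ℂ) / 2 := by
  rw [show (π : ℂ) / 3 = (π / 3 : ℝ) by push_cast; ring, ← ofReal_sin, Real.sin_pi_div_three]
  push_cast
  ring

theorem exp_pi_div_three_mul_I : exp (π / 3 * I) = 1 / 2 + (Real.sqrt 3 : ℂ) / 2 * I := by
  rw [exp_mul_I, cos_pi_div_three, sin_pi_div_three]

theorem inv_exp_pi_div_three_mul_I :
    (exp (π / 3 * I))⁻¹ = 1 / 2 - (Real.sqrt 3 : ℂ) / 2 * I := by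
  rw [← exp_neg, ← neg_mul, exp_mul_I, cos_neg, sin_neg, cos_pi_div_three, sin_pi_div_three]
  ring

theorem stmt_10 (x : ℂ) :
    (∑' ν : ℤ, (-1 : ℂ) ^ ν * besselJ (3 * ν) x
        = (1 / 3) * (1 + 2 * Complex.cos (x * (Real.sqrt 3 : ℝ) / 2))) ∧
    (∑' ν : ℤ, (-1 : ℂ) ^ ν * besselJ (3 * ν + 1) x
        = -((1 / 3) * (1 - 2 * Complex.cos (x * (Real.sqrt 3 : ℝ) / 2 - (π : ℂ) / 3)))) := by
  obtain ⟨ω, hω_def⟩ : ∃ ω, exp (π / 3 * I) = ω := ⟨_, rfl⟩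
  have hω0 : ω ≠ 0 := hω_def ▸ exp_ne_zero _
  have hω := hω_def ▸ exp_pi_div_three_mul_I
  have hω_inv := hω_def ▸ inv_exp_pi_div_three_mul_I
  have hfilter := hasSum_three_mul_neg_one_zpow_mul_of_cube_roots
    (by linear_combination hω + hω_inv) (hasSum_besselJ_mul_zpow x hω0)
    (hasSum_besselJ_mul_zpow x (neg_ne_zero.2 one_ne_zero))
    (hasSum_besselJ_mul_zpow x (inv_ne_zero hω0))
  rw [inv_inv, show x * (ω - ω⁻¹) / 2 = x * (Real.sqrt 3 : ℝ) / 2 * I by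
      linear_combination x / 2 * (hω - hω_inv),
    show x * (ω⁻¹ - ω) / 2 = -(x * (Real.sqrt 3 : ℝ) / 2 * I) by
      linear_combination x / 2 * (hω_inv - hω),
    show x * (-1 - (-1)⁻¹) / 2 = 0 by norm_num, exp_zero, exp_neg] at hfilter
  constructor
  · have h := (hfilter 0).tsum_eq
    simp only [tsum_mul_left, add_zero, zpow_zero] at h
    rw [two_cos, neg_mul, exp_neg]
    linear_combination h / 3
  · have h := (hfilter 1).tsum_eq
    simp only [tsum_mul_left, zpow_one] at h
    rw [two_cos, sub_mul, exp_sub, neg_sub, sub_mul, exp_sub, hω_def]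
    linear_combination h / 3
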